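/- Let M be a finitely generated A_n-module and let χ(t) = Σ_{i=0}^{2n} a_i·C(t+i, i) (with integer coefficients a_i) be the Bernstein polynomial associated with a finite system of generators f_1,…,f_m of M. Then the numbers a_{2n}, d = deg χ, and a_d do not depend on the finite system of generators of M with which the polynomial is associated: if χ*(t) = Σ_{i=0}^{2n} b_i·C(t+i, i) is the Bernstein polynomial associated with another finite system of generators g_1,…,g_p of M, then deg χ* = d, b_d = a_d, and b_{2n} = a_{2n}. -/

import Mathlib

set_option maxHeartbeats 1000000
set_option synthInstance.maxHeartbeats 1000000
set_option linter.unusedSectionVars false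

noncomputable section

variable (K : Type*) [Field K] [CharZero K]

/-! ### Numerical polynomials -/

/-- A polynomial `f ∈ ℚ[t]` is numerical if `f(s) ∈ ℤ` for all sufficiently large `s ∈ ℕ`. -/
def Numerical (f : Polynomial ℚ) : Prop :=
  ∃ N : ℕ, ∀ s : ℕ, N ≤ s → ∃ z : ℤ, f.eval (s : ℚ) = (z : ℚ)

/-- The binomial polynomial `C(t+i, i) = (t+1)(t+2)⋯(t+i)/i!`. -/
def binomPoly (i : ℕ) : Polynomial ℚ :=
  (i.factorial : ℚ)⁻¹ • ∏ k ∈ Finset.range i, (Polynomial.X + Polynomial.C ((k : ℚ) + 1))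

/-- The generalized binomial polynomial `C(t+c, m) = (t+c)(t+c-1)⋯(t+c-m+1)/m!` for `c ∈ ℤ`. -/
def genBinomPoly (c : ℤ) (m : ℕ) : Polynomial ℚ :=
  (m.factorial : ℚ)⁻¹ • ∏ k ∈ Finset.range m, (Polynomial.X + Polynomial.C ((c : ℚ) - (k : ℚ)))

/-! ### The Weyl algebra as a ring of operators -/

/-- The multiplication-by-`x_i` operator on `K[x_1,…,x_n]`. -/
def xOp (n : ℕ) (i : Fin n) : Module.End K (MvPolynomial (Fin n) K) :=
  LinearMap.mulLeft K (MvPolynomial.X i)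

/-- The partial derivative operator `∂_i` on `K[x_1,…,x_n]`. -/
def dOp (n : ℕ) (i : Fin n) : Module.End K (MvPolynomial (Fin n) K) :=
  (MvPolynomial.pderiv i).toLinearMap

/-- The `n`-th Weyl algebra `A_n(K)`: the `K`-subalgebra of `End_K K[X]` generated by the
multiplication operators `x_1,…,x_n` and the derivations `∂_1,…,∂_n`. -/
def weylAlgebra (n : ℕ) : Subalgebra K (Module.End K (MvPolynomial (Fin n) K)) :=
  Algebra.adjoin K (Set.range (xOp K n) ∪ Set.range (dOp K n))

/-- A (multi-index pair for a) monomial `x^α ∂^β` of the Weyl algebra. -/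
abbrev Mon (n : ℕ) := (Fin n → ℕ) × (Fin n → ℕ)

/-- The operator `x^α ∂^β = x_1^{α_1}⋯x_n^{α_n} ∂_1^{β_1}⋯∂_n^{β_n}`. -/
def weylMonomial (n : ℕ) (α β : Fin n → ℕ) : Module.End K (MvPolynomial (Fin n) K) :=
  (((List.finRange n).map fun i => xOp K n i ^ α i).prod) *
    (((List.finRange n).map fun i => dOp K n i ^ β i).prod)

lemma weylMonomial_mem (n : ℕ) (α β : Fin n → ℕ) :
    weylMonomial K n α β ∈ weylAlgebra K n := by
  apply mul_mem
  · apply list_prod_mem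
    intro x hx
    simp only [List.mem_map] at hx
    obtain ⟨i, -, rfl⟩ := hx
    exact pow_mem (Algebra.subset_adjoin (Set.mem_union_left _ (Set.mem_range_self i))) _
  · apply list_prod_mem
    intro x hx
    simp only [List.mem_map] at hx
    obtain ⟨i, -, rfl⟩ := hx
    exact pow_mem (Algebra.subset_adjoin (Set.mem_union_right _ (Set.mem_range_self i))) _

/-- The monomial `x^α ∂^β` as an element of the Weyl algebra. -/
def wMon (n : ℕ) (θ : Mon n) : ↥(weylAlgebra K n) :=
  ⟨weylMonomial K n θ.1 θ.2, weylMonomial_mem K n θ.1 θ.2⟩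

/-- The degree `|α| + |β|` of the monomial `x^α ∂^β`. -/
def monDeg {n : ℕ} (θ : Mon n) : ℕ := (∑ i, θ.1 i) + (∑ i, θ.2 i)

/-! ### Order and divisibility on monomials -/

/-- Lexicographic order on tuples of natural numbers. -/
def vecLexLT {N : ℕ} (v w : Fin N → ℕ) : Prop :=
  ∃ i, (∀ j, j < i → v j = w j) ∧ v i < w i

/-- The order on monomials of the Weyl algebra: compare `(deg, α_1,…,α_n, β_1,…,β_n)`
lexicographically. -/
def monLT {n : ℕ} (θ θ' : Mon n) : Prop :=
  monDeg θ < monDeg θ' ∨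
    (monDeg θ = monDeg θ' ∧ vecLexLT (Fin.append θ.1 θ.2) (Fin.append θ'.1 θ'.2))

def monLE {n : ℕ} (θ θ' : Mon n) : Prop := monLT θ θ' ∨ θ = θ'

/-- `x^α ∂^β` divides `x^γ ∂^δ` iff `α ≤ γ` and `β ≤ δ` componentwise. -/
def monDvd {n : ℕ} (θ θ' : Mon n) : Prop := θ.1 ≤ θ'.1 ∧ θ.2 ≤ θ'.2

/-- The quotient monomial `θ'/θ`. -/
def monQuot {n : ℕ} (θ' θ : Mon n) : Mon n := (θ'.1 - θ.1, θ'.2 - θ.2)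

/-- The least common multiple of two monomials. -/
def monLcm {n : ℕ} (θ θ' : Mon n) : Mon n := (θ.1 ⊔ θ'.1, θ.2 ⊔ θ'.2)

/-! ### The free module `E` over the Weyl algebra -/

/-- A free `A_n`-module with free generators `e_1,…,e_m`, realized as `A_n^m`. -/
abbrev EMod (n m : ℕ) := Fin m → ↥(weylAlgebra K n)

instance (n : ℕ) : Ring ↥(weylAlgebra K n) := inferInstance

instance (n : ℕ) : Algebra K ↥(weylAlgebra K n) := inferInstance

instance (n m : ℕ) : AddCommGroup (EMod K n m) := inferInstance

instance (n m : ℕ) : Module ↥(weylAlgebra K n) (EMod K n m) := inferInstance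

instance (n m : ℕ) : Module K (EMod K n m) := inferInstance

/-- A monomial `θ e_i` of `E` is a pair `(θ, i)`. -/
abbrev EMon (n m : ℕ) := Mon n × Fin m

/-- The monomial `θ e_i` as an element of `E`. -/
def emon {n m : ℕ} (w : EMon n m) : EMod K n m := Pi.single w.2 (wMon K n w.1)

/-- The order on monomials of `E`: `θ e_i < θ' e_j` iff `θ < θ'`, or `θ = θ'` and `i < j`. -/
def emonLT {n m : ℕ} (w w' : EMon n m) : Prop :=
  monLT w.1 w'.1 ∨ (w.1 = w'.1 ∧ w.2 < w'.2)

def emonLE {n m : ℕ} (w w' : EMon n m) : Prop := emonLT w w' ∨ w = w'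

/-- `θ e_i` divides `θ' e_j` iff `i = j` and `θ` divides `θ'`. -/
def emonDvd {n m : ℕ} (w w' : EMon n m) : Prop := w.2 = w'.2 ∧ monDvd w.1 w'.1

/-- `c` is the coordinate representation of `f ∈ E` in the `K`-basis of monomials of `E`. -/
def IsRepr {n m : ℕ} (f : EMod K n m) (c : EMon n m →₀ K) : Prop :=
  f = c.sum fun w k => k • emon K w

/-- The monomial `w` appears in `f` (with a nonzero coefficient). -/
def appearsIn {n m : ℕ} (f : EMod K n m) (w : EMon n m) : Prop :=
  ∃ c, IsRepr K f c ∧ w ∈ c.support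

/-- `w` is the leading monomial of `f` and `a` its leading coefficient. -/
def IsLead {n m : ℕ} (f : EMod K n m) (w : EMon n m) (a : K) : Prop :=
  ∃ c, IsRepr K f c ∧ w ∈ c.support ∧
    (∀ w' ∈ c.support, w' ≠ w → emonLT w' w) ∧ a = c w

/-- `w` is the leading monomial of `f`. -/
def IsLM {n m : ℕ} (f : EMod K n m) (w : EMon n m) : Prop := ∃ a, IsLead K f w a

/-- `f` is reduced with respect to `G`: `f = 0` or no monomial appearing in `f` is a multiple
of the leading monomial of an element of `G`. -/
def ReducedWrt {n m : ℕ} (f : EMod K n m) (G : Set (EMod K n m)) : Prop :=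
  f = 0 ∨ ∀ w, appearsIn K f w → ∀ g ∈ G, ∀ wg, IsLM K g wg → ¬ emonDvd wg w

/-- `h` is the S-polynomial `S(f,g)`. -/
def IsSPoly {n m : ℕ} (f g h : EMod K n m) : Prop :=
  ∃ wf af wg ag, IsLead K f wf af ∧ IsLead K g wg ag ∧
    ((wf.2 ≠ wg.2 ∧ h = 0) ∨
      (wf.2 = wg.2 ∧
        h = af⁻¹ • (wMon K n (monQuot (monLcm wf.1 wg.1) wf.1) • f)
          - ag⁻¹ • (wMon K n (monQuot (monLcm wf.1 wg.1) wg.1) • g)))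

/-- One-step reduction of `f` to `h` modulo `g`. -/
def ReduceStep {n m : ℕ} (g f h : EMod K n m) : Prop :=
  g ≠ 0 ∧ ∃ c : EMon n m →₀ K, IsRepr K f c ∧ ∃ w ∈ c.support, ∃ wg ag,
    IsLead K g wg ag ∧ emonDvd wg w ∧
    h = f - (c w * ag⁻¹) • (wMon K n (monQuot w.1 wg.1) • g)

/-- `f` reduces to `h` modulo the set `G` (finitely many one-step reductions). -/
def ReducesTo {n m : ℕ} (G : Set (EMod K n m)) (f h : EMod K n m) : Prop :=
  Relation.ReflTransGen (fun x y => ∃ g ∈ G, ReduceStep K g x y) f h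

/-- `g_1,…,g_s` is a Gröbner basis of the submodule `N` of `E`. -/
def IsGroebnerBasis {n m s : ℕ} (g : Fin s → EMod K n m)
    (N : Submodule (weylAlgebra K n) (EMod K n m)) : Prop :=
  (∀ i, g i ≠ 0) ∧ (∀ i, g i ∈ N) ∧
    ∀ f ∈ N, f ≠ 0 → ∀ w, IsLM K f w → ∃ i wi, IsLM K (g i) wi ∧ emonDvd wi w

/-! ### Bernstein filtration and Bernstein polynomials -/

/-- The Bernstein filtration `B_r` of the Weyl algebra: the `K`-span of the monomials of
degree at most `r`. -/
def BernsteinFil (n r : ℕ) : Submodule K ↥(weylAlgebra K n) :=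
  Submodule.span K {D : ↥(weylAlgebra K n) | ∃ θ : Mon n, monDeg θ ≤ r ∧ D = wMon K n θ}

/-- The filtration `M_r = Σ_i B_r f_i` of a module `M` generated by `f_1,…,f_p`. -/
def modFil (n : ℕ) {M : Type*} [AddCommGroup M] [Module (weylAlgebra K n) M]
    [Module K M] [IsScalarTower K (weylAlgebra K n) M] {p : ℕ}
    (f : Fin p → M) (r : ℕ) : Submodule K M :=
  Submodule.span K {x : M | ∃ i, ∃ D ∈ BernsteinFil K n r, x = D • f i}

/-- `χ` is the Bernstein polynomial of `M` associated with the system of generators `f`. -/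
def IsBernsteinOf (n : ℕ) {M : Type*} [AddCommGroup M] [Module (weylAlgebra K n) M]
    [Module K M] [IsScalarTower K (weylAlgebra K n) M] {p : ℕ}
    (f : Fin p → M) (χ : Polynomial ℚ) : Prop :=
  Submodule.span (weylAlgebra K n) (Set.range f) = ⊤ ∧ Numerical χ ∧
    ∃ N0 : ℕ, ∀ r : ℕ, N0 ≤ r →
      χ.eval (r : ℚ) = (Module.finrank K (modFil K n f r) : ℚ)

/-- `d = δ(M)`: `d` is the coefficient `a_{2n}` in the canonical representation
`χ(t) = Σ a_i C(t+i,i)` of a Bernstein polynomial of `M`. -/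
def HasDelta (n : ℕ) (M : Type*) [AddCommGroup M] [Module (weylAlgebra K n) M]
    [Module K M] [IsScalarTower K (weylAlgebra K n) M] (d : ℤ) : Prop :=
  ∃ (p : ℕ) (f : Fin p → M) (χ : Polynomial ℚ) (a : Fin (2*n+1) → ℤ),
    IsBernsteinOf K n f χ ∧ (χ = ∑ i, (a i : ℚ) • binomPoly (i : ℕ)) ∧
    d = a (Fin.last (2*n))

/-- A filtration of an `A_n`-module `P` with respect to the Bernstein filtration. -/
def IsBernsteinFiltration (n : ℕ) (P : Type*) [AddCommGroup P] [Module (weylAlgebra K n) P]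
    [Module K P] [IsScalarTower K (weylAlgebra K n) P]
    (Γ : ℕ → Submodule K P) : Prop :=
  (∀ r, Γ r ≤ Γ (r+1)) ∧ (∀ r, FiniteDimensional K (Γ r)) ∧ (⨆ r, Γ r) = ⊤ ∧
    ∀ r s : ℕ, ∀ D ∈ BernsteinFil K n r, ∀ x ∈ Γ s, D • x ∈ Γ (r+s)

/-- A good filtration: moreover `B_r Γ_s = Γ_{r+s}` for all `s ≥ s₀` and all `r`. -/
def IsGoodFiltration (n : ℕ) (P : Type*) [AddCommGroup P] [Module (weylAlgebra K n) P]
    [Module K P] [IsScalarTower K (weylAlgebra K n) P]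
    (Γ : ℕ → Submodule K P) : Prop :=
  IsBernsteinFiltration K n P Γ ∧
    ∃ s₀ : ℕ, ∀ s : ℕ, s₀ ≤ s → ∀ r : ℕ,
      Γ (r+s) ≤ Submodule.span K {y : P | ∃ D ∈ BernsteinFil K n r, ∃ x ∈ Γ s, y = D • x}

/-- The defining properties of the mapping `μ_U : B_U → ℤ ∪ {∞}` (on pairs from `U`). -/
def MuSpec (n : ℕ) (M : Type*) [AddCommGroup M] [Module (weylAlgebra K n) M]
    (U : Set (Submodule (weylAlgebra K n) M))
    (μ : Submodule (weylAlgebra K n) M → Submodule (weylAlgebra K n) M → WithTop ℤ) :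
    Prop :=
  (∀ N N', N ∈ U → N' ∈ U → N' ≤ N → ((-1 : ℤ) : WithTop ℤ) ≤ μ N N') ∧
    ∀ N N', N ∈ U → N' ∈ U → N' ≤ N → ∀ d : ℕ,
      (((d : ℤ) : WithTop ℤ) ≤ μ N N' ↔
        (N ≠ N' ∧ ∃ c : ℕ → Submodule (weylAlgebra K n) M,
          (∀ i, c i ∈ U) ∧ c 0 ≤ N ∧ (∀ i, c (i+1) ≤ c i) ∧ (∀ i, N' ≤ c i) ∧
          ∀ i, (((d : ℤ) - 1 : ℤ) : WithTop ℤ) ≤ μ (c i) (c (i+1))))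

/-!
Multiplication in the Weyl algebra respects the Bernstein filtration, `B_r B_s ⊆ B_{r+s}`:
moving `x_j` past `∂^β` only creates terms of lower degree since `[∂_j, x_j] = 1`. Every operator
lies in some `B_c`, so writing each `f_i` as a combination of the `g_j` gives `M_r ⊆ M*_{r+c}`,
and symmetrically `M*_r ⊆ M_{r+c'}`. Hence `χ(s) ≤ χ*(s + c)` and `χ*(s) ≤ χ(s + c')` for large
`s`; comparing leading terms of `χ*(X + c) - χ` and `χ(X + c') - χ*`, the two polynomials agree in
every degree `≥ max (deg χ) (deg χ*)`, so they have the same degree and the same coefficients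
there. Finally, in the basis `C(t+i, i)` every `a_k` with `k ≥ deg χ` is `k!` times the `k`-th
coefficient of `χ`.
-/

namespace Polynomial

open Filter

lemma coeff_taylor_of_natDegree_le {R : Type*} [CommSemiring R] {q : R[X]} (c : R) {d : ℕ} (hd : q.natDegree ≤ d) :
    (taylor c q).coeff d = q.coeff d := by
  rcases hd.lt_or_eq with hlt | rfl
  · rw [coeff_eq_zero_of_natDegree_lt hlt,
      coeff_eq_zero_of_natDegree_lt ((natDegree_taylor q c).trans_lt hlt)]
  · exact coeff_taylor_natDegree c q

section ShiftComparison

variable {𝕜 : Type*} [NormedField 𝕜] [LinearOrder 𝕜] [IsStrictOrderedRing 𝕜] [OrderTopology 𝕜]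
  [Archimedean 𝕜]

lemma leadingCoeff_nonneg_of_eventually_nonneg {P : 𝕜[X]}
    (h : ∀ᶠ s : ℕ in atTop, 0 ≤ P.eval (s : 𝕜)) : 0 ≤ P.leadingCoeff := by
  by_contra! hneg
  rcases le_or_gt P.degree 0 with hdeg | hdeg
  · obtain ⟨s, hs⟩ := h.exists
    rw [eq_C_of_degree_le_zero hdeg, eval_C] at hs
    rw [leadingCoeff, natDegree_eq_zero_iff_degree_le_zero.mpr hdeg] at hneg
    exact hs.not_gt hneg
  · have hbot := (P.tendsto_atBot_of_leadingCoeff_nonpos hdeg hneg.le).comp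
      tendsto_natCast_atTop_atTop
    obtain ⟨s, hs, hs'⟩ := (h.and (hbot.eventually (eventually_lt_atBot 0))).exists
    exact hs.not_gt hs'

lemma coeff_nonneg_of_eventually_nonneg {P : 𝕜[X]} {d : ℕ} (hd : P.natDegree ≤ d)
    (h : ∀ᶠ s : ℕ in atTop, 0 ≤ P.eval (s : 𝕜)) : 0 ≤ P.coeff d := by
  rcases hd.lt_or_eq with hlt | rfl
  · rw [coeff_eq_zero_of_natDegree_lt hlt]
  · exact leadingCoeff_nonneg_of_eventually_nonneg h

-- `q(X + c) - p` is eventually nonnegative and its `d`-th coefficient is `q_d - p_d`.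
lemma coeff_le_of_eventually_eval_le_eval_add {p q : 𝕜[X]} {c : 𝕜} {d : ℕ}
    (hp : p.natDegree ≤ d) (hq : q.natDegree ≤ d)
    (h : ∀ᶠ s : ℕ in atTop, p.eval (s : 𝕜) ≤ q.eval ((s : 𝕜) + c)) :
    p.coeff d ≤ q.coeff d := by
  have hdeg : (taylor c q - p).natDegree ≤ d :=
    (natDegree_sub_le _ _).trans (max_le ((natDegree_taylor q c).trans_le hq) hp)
  have hnonneg := coeff_nonneg_of_eventually_nonneg hdeg <| h.mono fun s hs => by
    rw [eval_sub, taylor_eval]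
    exact sub_nonneg.mpr hs
  rwa [coeff_sub, coeff_taylor_of_natDegree_le c hq, sub_nonneg] at hnonneg

lemma coeff_eq_of_eventually_eval_le_eval_add {p q : 𝕜[X]} {c c' : 𝕜}
    (hpq : ∀ᶠ s : ℕ in atTop, p.eval (s : 𝕜) ≤ q.eval ((s : 𝕜) + c))
    (hqp : ∀ᶠ s : ℕ in atTop, q.eval (s : 𝕜) ≤ p.eval ((s : 𝕜) + c'))
    {d : ℕ} (hp : p.natDegree ≤ d) (hq : q.natDegree ≤ d) :
    p.coeff d = q.coeff d :=
  (coeff_le_of_eventually_eval_le_eval_add hp hq hpq).antisymm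
    (coeff_le_of_eventually_eval_le_eval_add hq hp hqp)

end ShiftComparison

lemma degree_eq_of_coeff_eq_of_natDegree_le {R : Type*} [Semiring R] {p q : R[X]}
    (h : ∀ d, p.natDegree ≤ d → q.natDegree ≤ d → p.coeff d = q.coeff d) :
    p.degree = q.degree := by
  wlog hle : p.natDegree ≤ q.natDegree generalizing p q
  · exact (this (fun d hq hp => (h d hp hq).symm) (le_of_not_ge hle)).symm
  have htop : p.coeff q.natDegree = q.leadingCoeff := h _ hle le_rfl
  by_cases hq : q = 0
  · subst hq
    rw [natDegree_zero, nonpos_iff_eq_zero] at hle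
    rw [leadingCoeff_zero, natDegree_zero, ← hle] at htop
    rw [leadingCoeff_eq_zero.mp htop]
  · have hp : p.natDegree = q.natDegree :=
      hle.antisymm (le_natDegree_of_ne_zero (htop ▸ leadingCoeff_ne_zero.mpr hq))
    have hp0 : p ≠ 0 := by
      rintro rfl
      exact hq (leadingCoeff_eq_zero.mp (htop.symm.trans (coeff_zero _)))
    rw [degree_eq_natDegree hp0, degree_eq_natDegree hq, hp]

end Polynomial

section BinomialBasis

open Polynomial

lemma monic_prod_X_add_succ (i : ℕ) :
    (∏ k ∈ Finset.range i, (X + C ((k : ℚ) + 1))).Monic :=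
  monic_prod_of_monic _ _ fun _ _ => monic_X_add_C _

lemma natDegree_prod_X_add_succ (i : ℕ) :
    (∏ k ∈ Finset.range i, (X + C ((k : ℚ) + 1))).natDegree = i := by
  rw [natDegree_prod_of_monic _ _ fun _ _ => monic_X_add_C _]
  simp only [natDegree_X_add_C, Finset.sum_const, Finset.card_range, smul_eq_mul, mul_one]

lemma natDegree_binomPoly_le (i : ℕ) : (binomPoly i).natDegree ≤ i :=
  (natDegree_smul_le _ _).trans (natDegree_prod_X_add_succ i).le

lemma coeff_binomPoly_self (i : ℕ) : (binomPoly i).coeff i = (i.factorial : ℚ)⁻¹ := by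
  have h := (monic_prod_X_add_succ i).coeff_natDegree
  rw [natDegree_prod_X_add_succ] at h
  rw [binomPoly, coeff_smul, h, smul_eq_mul, mul_one]

variable {N : ℕ}

lemma natDegree_sum_binomPoly_le (a : Fin (N + 1) → ℚ) :
    (∑ i, a i • binomPoly i).natDegree ≤ N :=
  natDegree_sum_le_of_forall_le _ _ fun i _ =>
    (natDegree_smul_le _ _).trans ((natDegree_binomPoly_le i).trans (Nat.lt_succ_iff.mp i.isLt))

lemma coeff_sum_binomPoly_of_forall_gt (a : Fin (N + 1) → ℚ) {k : Fin (N + 1)}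
    (h : ∀ j, k < j → a j = 0) :
    (∑ i, a i • binomPoly i).coeff k = a k / (k : ℕ).factorial := by
  rw [finsetSum_coeff, Finset.sum_eq_single k, coeff_smul, coeff_binomPoly_self, smul_eq_mul,
    div_eq_mul_inv]
  · intro j _ hjk
    rcases hjk.lt_or_gt with hlt | hgt
    · rw [coeff_smul, coeff_eq_zero_of_natDegree_lt ((natDegree_binomPoly_le j).trans_lt hlt),
        smul_zero]
    · rw [h j hgt, zero_smul, coeff_zero]
  · exact fun hk => absurd (Finset.mem_univ k) hk

lemma eq_factorial_mul_coeff_of_eq_sum_binomPoly {χ : ℚ[X]} {a : Fin (N + 1) → ℚ}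
    (hχ : χ = ∑ i, a i • binomPoly i) {k : Fin (N + 1)} (hk : χ.natDegree ≤ k) :
    a k = (k : ℕ).factorial * χ.coeff k := by
  -- the last nonzero `a_j` is `j!` times the `j`-th coefficient of `χ`
  have hvanish : ∀ j : Fin (N + 1), χ.natDegree < j → a j = 0 := by
    by_contra! hne
    obtain ⟨j, hj, hmax⟩ :=
      (Finset.univ.filter fun j : Fin (N + 1) => χ.natDegree < j ∧ a j ≠ 0).exists_max_image id
        (by simpa [Finset.Nonempty] using hne)
    rw [Finset.mem_filter] at hj
    have hcoeff := coeff_sum_binomPoly_of_forall_gt a (k := j) fun j' hj' => by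
      by_contra hj'0
      exact (hmax j' (Finset.mem_filter.mpr ⟨Finset.mem_univ _,
        hj.2.1.trans (Fin.lt_def.mp hj'), hj'0⟩)).not_gt hj'
    rw [← hχ, coeff_eq_zero_of_natDegree_lt hj.2.1, eq_comm, div_eq_zero_iff] at hcoeff
    exact hj.2.2 (hcoeff.resolve_right (Nat.cast_ne_zero.mpr (Nat.factorial_ne_zero _)))
  rw [hχ, coeff_sum_binomPoly_of_forall_gt a fun j hj => hvanish j (hk.trans_lt hj),
    mul_div_cancel₀ _ (Nat.cast_ne_zero.mpr (Nat.factorial_ne_zero _))]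

end BinomialBasis

section CommutingPowers

variable {ι R : Type*}

lemma List.prod_map_pow_add [Monoid R] {A : ι → R} (hA : ∀ i j, Commute (A i) (A j))
    (α β : ι → ℕ) (l : List ι) :
    (l.map fun i => A i ^ (α + β) i).prod
      = (l.map fun i => A i ^ α i).prod * (l.map fun i => A i ^ β i).prod := by
  induction l with
  | nil => simp
  | cons i t ih =>
    have hcomm : Commute (A i ^ β i) (t.map fun i => A i ^ α i).prod :=
      Commute.list_prod_right _ _ fun x hx => by
        obtain ⟨j, -, rfl⟩ := List.mem_map.mp hx
        exact (hA i j).pow_pow _ _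
    simp only [List.map_cons, List.prod_cons]
    rw [ih, Pi.add_apply, pow_add, mul_assoc, ← mul_assoc (A i ^ β i), hcomm.eq]
    simp only [mul_assoc]

lemma List.prod_map_pow_single [Monoid R] [DecidableEq ι] (A : ι → R) {l : List ι}
    (hl : l.Nodup) {j : ι} (hj : j ∈ l) (k : ℕ) :
    (l.map fun i => A i ^ Pi.single j k i).prod = A j ^ k := by
  rw [List.prod_map_eq_pow_single j _ fun i hij _ => by rw [Pi.single_eq_of_ne hij, pow_zero],
    List.count_eq_one_of_mem hl hj, pow_one, Pi.single_eq_same]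

lemma pow_mul_eq_mul_pow_add_of_mul_eq_add_one [Ring R] {d x : R} (h : d * x = x * d + 1)
    (k : ℕ) : d ^ k * x = x * d ^ k + k • d ^ (k - 1) := by
  induction k with
  | zero => simp
  | succ k ih =>
    rw [pow_succ, mul_assoc, h, mul_add, mul_one, ← mul_assoc, ih, add_mul, mul_assoc,
      ← pow_succ, smul_mul_assoc, Nat.add_sub_cancel, succ_nsmul]
    rcases k with _ | k
    · simp
    · rw [Nat.add_sub_cancel, ← pow_succ]
      abel

lemma List.prod_map_pow_mul_of_mul_eq_add_one [Ring R] [DecidableEq ι] {A : ι → R} {x : R}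
    {j : ι} (hA : ∀ i, i ≠ j → Commute (A i) x) (hj : A j * x = x * A j + 1) (β : ι → ℕ)
    {l : List ι} (hl : l.Nodup) (hjl : j ∈ l) :
    (l.map fun i => A i ^ β i).prod * x
      = x * (l.map fun i => A i ^ β i).prod
        + β j • (l.map fun i => A i ^ (β - Pi.single j 1 : ι → ℕ) i).prod := by
  induction l with
  | nil => cases hjl
  | cons i t ih =>
    obtain ⟨hit, ht⟩ := List.nodup_cons.mp hl
    simp only [List.map_cons, List.prod_cons]
    rcases List.mem_cons.mp hjl with rfl | hjt
    · have htx : Commute (t.map fun i => A i ^ β i).prod x :=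
        Commute.list_prod_left _ _ fun y hy => by
          obtain ⟨i, hi, rfl⟩ := List.mem_map.mp hy
          exact (hA i (ne_of_mem_of_not_mem hi hit)).pow_left _
      have hrest :
          (t.map fun i => A i ^ (β - Pi.single j 1 : ι → ℕ) i) = t.map fun i => A i ^ β i :=
        List.map_congr_left fun i hi => by
          rw [Pi.sub_apply, Pi.single_eq_of_ne (ne_of_mem_of_not_mem hi hit), Nat.sub_zero]
      rw [mul_assoc, htx.eq, ← mul_assoc, pow_mul_eq_mul_pow_add_of_mul_eq_add_one hj, hrest,
        Pi.sub_apply, Pi.single_eq_same, add_mul, mul_assoc, smul_mul_assoc]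
    · have hij : i ≠ j := fun h => hit (h ▸ hjt)
      rw [mul_assoc, ih ht hjt, mul_add, ← mul_assoc, ((hA i hij).pow_left _).eq, mul_assoc,
        mul_smul_comm, Pi.sub_apply, Pi.single_eq_of_ne hij, Nat.sub_zero]

end CommutingPowers

lemma MvPolynomial.pderiv_pderiv_comm {R σ : Type*} [CommRing R] (i j : σ)
    (p : MvPolynomial σ R) :
    pderiv i (pderiv j p) = pderiv j (pderiv i p) := by
  classical
  have h : ⁅pderiv (R := R) i, pderiv (R := R) j⁆ = 0 := by
    refine derivation_ext fun k => ?_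
    simp only [Derivation.commutator_apply, pderiv_X, Pi.single_apply]
    split_ifs <;> simp
  simpa [Derivation.commutator_apply, sub_eq_zero] using congr($h p)

section WeylGenerators

variable {n : ℕ}

lemma xOp_commute (i j : Fin n) : Commute (xOp K n i) (xOp K n j) :=
  LinearMap.ext fun p => by simp only [Module.End.mul_apply, xOp, LinearMap.mulLeft_apply]; ring

lemma dOp_commute (i j : Fin n) : Commute (dOp K n i) (dOp K n j) :=
  LinearMap.ext fun p => by simpa [dOp] using MvPolynomial.pderiv_pderiv_comm i j p

lemma dOp_commute_xOp {i j : Fin n} (h : i ≠ j) : Commute (dOp K n i) (xOp K n j) :=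
  LinearMap.ext fun p => by
    simp only [Module.End.mul_apply, dOp, xOp, LinearMap.mulLeft_apply, Derivation.coeFn_coe,
      MvPolynomial.pderiv_mul, MvPolynomial.pderiv_X_of_ne h.symm]
    ring

lemma dOp_mul_xOp_self (i : Fin n) : dOp K n i * xOp K n i = xOp K n i * dOp K n i + 1 :=
  LinearMap.ext fun p => by
    simp only [Module.End.mul_apply, LinearMap.add_apply, Module.End.one_apply, dOp, xOp,
      LinearMap.mulLeft_apply, Derivation.coeFn_coe, MvPolynomial.pderiv_mul,
      MvPolynomial.pderiv_X_self]
    ring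

variable (n) in
def weylX (j : Fin n) : weylAlgebra K n :=
  ⟨xOp K n j, Algebra.subset_adjoin (Or.inl ⟨j, rfl⟩)⟩

variable (n) in
def weylD (j : Fin n) : weylAlgebra K n :=
  ⟨dOp K n j, Algebra.subset_adjoin (Or.inr ⟨j, rfl⟩)⟩

lemma wMon_zero : wMon K n 0 = 1 :=
  Subtype.ext <| by simp [wMon, weylMonomial]

lemma wMon_mul_weylD (θ : Mon n) (j : Fin n) :
    wMon K n θ * weylD K n j = wMon K n (θ.1, θ.2 + Pi.single j 1) := by
  apply Subtype.ext
  change weylMonomial K n θ.1 θ.2 * dOp K n j = weylMonomial K n θ.1 (θ.2 + Pi.single j 1)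
  rw [weylMonomial, weylMonomial, List.prod_map_pow_add (dOp_commute K),
    List.prod_map_pow_single _ (List.nodup_finRange n) (List.mem_finRange j), pow_one, mul_assoc]

lemma wMon_mul_weylX (θ : Mon n) (j : Fin n) :
    wMon K n θ * weylX K n j
      = wMon K n (θ.1 + Pi.single j 1, θ.2)
        + (θ.2 j : K) • wMon K n (θ.1, θ.2 - Pi.single j 1) := by
  apply Subtype.ext
  change weylMonomial K n θ.1 θ.2 * xOp K n j
    = weylMonomial K n (θ.1 + Pi.single j 1) θ.2
      + (θ.2 j : K) • weylMonomial K n θ.1 (θ.2 - Pi.single j 1)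
  rw [weylMonomial, weylMonomial, weylMonomial, mul_assoc,
    List.prod_map_pow_mul_of_mul_eq_add_one (fun i hi => dOp_commute_xOp K hi)
      (dOp_mul_xOp_self K j) _ (List.nodup_finRange n) (List.mem_finRange j),
    mul_add, ← mul_assoc, List.prod_map_pow_add (xOp_commute K),
    List.prod_map_pow_single _ (List.nodup_finRange n) (List.mem_finRange j), pow_one,
    Nat.cast_smul_eq_nsmul, mul_smul_comm]

lemma weylX_eq_wMon (j : Fin n) : weylX K n j = wMon K n (Pi.single j 1, 0) := by
  simpa [wMon_zero] using wMon_mul_weylX K (0 : Mon n) j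

lemma weylD_eq_wMon (j : Fin n) : weylD K n j = wMon K n (0, Pi.single j 1) := by
  simpa [wMon_zero] using wMon_mul_weylD K (0 : Mon n) j

end WeylGenerators

lemma sum_add_single {ι : Type*} [Fintype ι] [DecidableEq ι] (α : ι → ℕ) (j : ι) :
    ∑ i, (α + Pi.single j 1 : ι → ℕ) i = ∑ i, α i + 1 := by
  simp [Finset.sum_add_distrib, Finset.sum_pi_single']

lemma sum_sub_single_le {ι : Type*} [Fintype ι] [DecidableEq ι] (α : ι → ℕ) (j : ι) :
    ∑ i, (α - Pi.single j 1 : ι → ℕ) i ≤ ∑ i, α i :=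
  Finset.sum_le_sum fun _ _ => Nat.sub_le _ _

lemma exists_eq_add_single {ι : Type*} [DecidableEq ι] {α : ι → ℕ} {j : ι} (h : α j ≠ 0) :
    ∃ α' : ι → ℕ, α = α' + Pi.single j 1 := by
  refine ⟨α - Pi.single j 1, funext fun i => ?_⟩
  rcases eq_or_ne i j with rfl | hij
  · simp only [Pi.add_apply, Pi.sub_apply, Pi.single_eq_same]
    omega
  · simp [Pi.single_eq_of_ne hij]

section BernsteinFiltration

variable {n : ℕ}

lemma monDeg_eq_zero {θ : Mon n} (h : monDeg θ = 0) : θ = 0 := by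
  simp only [monDeg, Nat.add_eq_zero_iff, Finset.sum_eq_zero_iff, Finset.mem_univ,
    forall_const] at h
  exact Prod.ext (funext h.1) (funext h.2)

lemma finite_setOf_monDeg_le (r : ℕ) : {θ : Mon n | monDeg θ ≤ r}.Finite :=
  ((Set.finite_Iic fun _ => r).prod (Set.finite_Iic fun _ => r)).subset fun θ hθ =>
    ⟨fun i => (Finset.single_le_sum (fun i _ => Nat.zero_le (θ.1 i)) (Finset.mem_univ i)).trans
        ((Nat.le_add_right _ _).trans hθ),
      fun i => (Finset.single_le_sum (fun i _ => Nat.zero_le (θ.2 i)) (Finset.mem_univ i)).trans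
        ((Nat.le_add_left _ _).trans hθ)⟩

lemma wMon_mem_bernsteinFil {θ : Mon n} {r : ℕ} (h : monDeg θ ≤ r) :
    wMon K n θ ∈ BernsteinFil K n r :=
  Submodule.subset_span ⟨θ, h, rfl⟩

lemma bernsteinFil_mono : Monotone (BernsteinFil K n) := fun _ _ hrs =>
  Submodule.span_mono fun _ ⟨θ, hθ, hD⟩ => ⟨θ, hθ.trans hrs, hD⟩

instance (r : ℕ) : FiniteDimensional K (BernsteinFil K n r) := by
  refine FiniteDimensional.span_of_finite K
    (((finite_setOf_monDeg_le r).image (wMon K n)).subset ?_)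
  rintro _ ⟨θ, hθ, rfl⟩
  exact ⟨θ, hθ, rfl⟩

lemma bernsteinFil_zero_le_one : BernsteinFil K n 0 ≤ 1 := by
  rw [BernsteinFil, Submodule.span_le]
  rintro _ ⟨θ, hθ, rfl⟩
  rw [monDeg_eq_zero (Nat.le_zero.mp hθ), wMon_zero]
  exact Submodule.one_le.mp le_rfl

variable (n) in
def weylGens : Submodule K (weylAlgebra K n) :=
  Submodule.span K (Set.range (weylX K n) ∪ Set.range (weylD K n))

lemma weylGens_le_bernsteinFil_one : weylGens K n ≤ BernsteinFil K n 1 := by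
  rw [weylGens, Submodule.span_le]
  rintro _ (⟨j, rfl⟩ | ⟨j, rfl⟩)
  · rw [weylX_eq_wMon]
    exact wMon_mem_bernsteinFil K (by simp [monDeg])
  · rw [weylD_eq_wMon]
    exact wMon_mem_bernsteinFil K (by simp [monDeg])

lemma bernsteinFil_mul_weylGens_le (r : ℕ) :
    BernsteinFil K n r * weylGens K n ≤ BernsteinFil K n (r + 1) := by
  rw [BernsteinFil, weylGens, Submodule.span_mul_span, Submodule.span_le]
  rintro _ ⟨_, ⟨θ, hθ, rfl⟩, _, ⟨j, rfl⟩ | ⟨j, rfl⟩, rfl⟩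
  · dsimp only
    rw [wMon_mul_weylX]
    refine add_mem (wMon_mem_bernsteinFil K ?_) (Submodule.smul_mem _ _ ?_)
    · simp only [monDeg, sum_add_single] at hθ ⊢
      omega
    · refine wMon_mem_bernsteinFil K ?_
      have := sum_sub_single_le θ.2 j
      simp only [monDeg] at hθ ⊢
      omega
  · dsimp only
    rw [wMon_mul_weylD]
    refine wMon_mem_bernsteinFil K ?_
    simp only [monDeg, sum_add_single] at hθ ⊢
    omega

/-- A monomial of degree `r + 1` is a monomial of degree `r` times a generator, up to a
monomial of lower degree coming from `[∂_j, x_j] = 1`. -/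
lemma bernsteinFil_succ_le (r : ℕ) :
    BernsteinFil K n (r + 1) ≤ BernsteinFil K n r ⊔ BernsteinFil K n r * weylGens K n := by
  rw [BernsteinFil, Submodule.span_le]
  rintro _ ⟨⟨α, β⟩, hθ, rfl⟩
  by_cases hle : monDeg (α, β) ≤ r
  · exact Submodule.mem_sup_left (wMon_mem_bernsteinFil K hle)
  obtain ⟨j, hj⟩ : ∃ j, α j ≠ 0 ∨ β j ≠ 0 := by
    by_contra! h
    have : (α, β) = 0 := Prod.ext (funext fun j => (h j).1) (funext fun j => (h j).2)
    rw [this] at hle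
    exact hle (by simp [monDeg])
  rcases hj with hα | hβ
  · obtain ⟨α, rfl⟩ := exists_eq_add_single hα
    have hdeg : monDeg (α, β) ≤ r := by
      simp only [monDeg, sum_add_single] at hθ ⊢
      omega
    have hsplit : wMon K n (α + Pi.single j 1, β)
        = wMon K n (α, β) * weylX K n j - (β j : K) • wMon K n (α, β - Pi.single j 1) :=
      eq_sub_of_add_eq (wMon_mul_weylX K (α, β) j).symm
    rw [hsplit]
    refine sub_mem (Submodule.mem_sup_right (Submodule.mul_mem_mul
      (wMon_mem_bernsteinFil K hdeg) (Submodule.subset_span (Or.inl ⟨j, rfl⟩))))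
      (Submodule.mem_sup_left (Submodule.smul_mem _ _ (wMon_mem_bernsteinFil K ?_)))
    have := sum_sub_single_le β j
    simp only [monDeg] at hdeg ⊢
    omega
  · obtain ⟨β, rfl⟩ := exists_eq_add_single hβ
    have hdeg : monDeg (α, β) ≤ r := by
      simp only [monDeg, sum_add_single] at hθ ⊢
      omega
    rw [← wMon_mul_weylD K (α, β) j]
    exact Submodule.mem_sup_right (Submodule.mul_mem_mul (wMon_mem_bernsteinFil K hdeg)
      (Submodule.subset_span (Or.inr ⟨j, rfl⟩)))

lemma bernsteinFil_mul_le (r s : ℕ) :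
    BernsteinFil K n r * BernsteinFil K n s ≤ BernsteinFil K n (r + s) := by
  induction s with
  | zero => simpa using mul_le_mul_right (bernsteinFil_zero_le_one K) (BernsteinFil K n r)
  | succ s ih =>
    calc BernsteinFil K n r * BernsteinFil K n (s + 1)
        ≤ BernsteinFil K n r * (BernsteinFil K n s ⊔ BernsteinFil K n s * weylGens K n) :=
          mul_le_mul_right (bernsteinFil_succ_le K s) _
      _ = BernsteinFil K n r * BernsteinFil K n s
            ⊔ BernsteinFil K n r * BernsteinFil K n s * weylGens K n := by
          rw [Submodule.mul_sup, mul_assoc]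
      _ ≤ BernsteinFil K n (r + s) ⊔ BernsteinFil K n (r + s) * weylGens K n :=
          sup_le_sup ih (mul_le_mul_left ih _)
      _ ≤ BernsteinFil K n (r + (s + 1)) :=
          sup_le (bernsteinFil_mono K (by omega)) (bernsteinFil_mul_weylGens_le K (r + s))

lemma exists_mem_bernsteinFil (D : weylAlgebra K n) : ∃ r, D ∈ BernsteinFil K n r := by
  obtain ⟨D, hD⟩ := D
  change D ∈ Algebra.adjoin K _ at hD
  induction hD using Algebra.adjoin_induction with
  | mem x hx =>
    refine ⟨1, weylGens_le_bernsteinFil_one K (Submodule.subset_span ?_)⟩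
    rcases hx with ⟨j, rfl⟩ | ⟨j, rfl⟩
    · exact Or.inl ⟨j, rfl⟩
    · exact Or.inr ⟨j, rfl⟩
  | algebraMap c =>
    refine ⟨0, ?_⟩
    change algebraMap K (weylAlgebra K n) c ∈ _
    rw [Algebra.algebraMap_eq_smul_one, ← wMon_zero K]
    exact Submodule.smul_mem _ _ (wMon_mem_bernsteinFil K (by simp [monDeg]))
  | add x y _ _ hx hy =>
    obtain ⟨r, hr⟩ := hx
    obtain ⟨s, hs⟩ := hy
    exact ⟨max r s, add_mem (bernsteinFil_mono K (le_max_left r s) hr)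
      (bernsteinFil_mono K (le_max_right r s) hs)⟩
  | mul x y _ _ hx hy =>
    obtain ⟨r, hr⟩ := hx
    obtain ⟨s, hs⟩ := hy
    exact ⟨r + s, bernsteinFil_mul_le K r s (Submodule.mul_mem_mul hr hs)⟩

end BernsteinFiltration

section ModuleFiltration

variable {n : ℕ} {M : Type*} [AddCommGroup M] [Module (weylAlgebra K n) M] [Module K M]
  [IsScalarTower K (weylAlgebra K n) M]

instance {p : ℕ} (f : Fin p → M) (r : ℕ) : FiniteDimensional K (modFil K n f r) := by
  refine Submodule.finiteDimensional_of_le (S₂ := ⨆ i, (BernsteinFil K n r).map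
    ((LinearMap.toSpanSingleton (weylAlgebra K n) M (f i)).restrictScalars K)) ?_
  rw [modFil, Submodule.span_le]
  rintro _ ⟨i, D, hD, rfl⟩
  exact Submodule.mem_iSup_of_mem i ⟨D, hD, rfl⟩

lemma exists_forall_mem_bernsteinFil {ι : Type*} [Finite ι] (w : ι → weylAlgebra K n) :
    ∃ c, ∀ i, w i ∈ BernsteinFil K n c := by
  choose c hc using fun i => exists_mem_bernsteinFil K (w i)
  cases nonempty_fintype ι
  exact ⟨Finset.univ.sup c, fun i =>
    bernsteinFil_mono K (Finset.le_sup (Finset.mem_univ i)) (hc i)⟩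

lemma exists_modFil_le_modFil_add {p q : ℕ} (f : Fin p → M) {g : Fin q → M}
    (hg : Submodule.span (weylAlgebra K n) (Set.range g) = ⊤) :
    ∃ c, ∀ r, modFil K n f r ≤ modFil K n g (r + c) := by
  choose w hw using fun i =>
    (Submodule.mem_span_range_iff_exists_fun _).mp (hg ▸ Submodule.mem_top (x := f i))
  obtain ⟨c, hc⟩ := exists_forall_mem_bernsteinFil K fun ij : Fin p × Fin q => w ij.1 ij.2
  refine ⟨c, fun r => ?_⟩
  rw [modFil, Submodule.span_le]
  rintro _ ⟨i, D, hD, rfl⟩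
  rw [← hw i, Finset.smul_sum]
  refine Submodule.sum_mem _ fun j _ => Submodule.subset_span ⟨j, D * w i j, ?_, smul_smul _ _ _⟩
  exact bernsteinFil_mul_le K r c (Submodule.mul_mem_mul hD (hc (i, j)))

lemma IsBernsteinOf.exists_eventually_eval_le_eval_add {p q : ℕ} {f : Fin p → M}
    {g : Fin q → M} {χ χ' : Polynomial ℚ} (hχ : IsBernsteinOf K n f χ)
    (hχ' : IsBernsteinOf K n g χ') :
    ∃ c : ℕ, ∀ᶠ s : ℕ in Filter.atTop, χ.eval (s : ℚ) ≤ χ'.eval ((s : ℚ) + c) := by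
  obtain ⟨-, -, N, hN⟩ := hχ
  obtain ⟨hg, -, N', hN'⟩ := hχ'
  obtain ⟨c, hc⟩ := exists_modFil_le_modFil_add K f hg
  refine ⟨c, (Filter.eventually_ge_atTop (max N N')).mono fun s hs => ?_⟩
  rw [hN s (le_of_max_le_left hs), ← Nat.cast_add, hN' (s + c) (by omega)]
  exact_mod_cast Submodule.finrank_mono (hc s)

end ModuleFiltration

theorem bernstein_invariants (n : ℕ)
    (M : Type*) [AddCommGroup M] [Module (weylAlgebra K n) M] [Module K M]
    [IsScalarTower K (weylAlgebra K n) M]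
    (m p : ℕ) (f : Fin m → M) (g : Fin p → M)
    (χ χ' : Polynomial ℚ) (a b : Fin (2*n+1) → ℤ)
    (hχ : IsBernsteinOf K n f χ) (hχ' : IsBernsteinOf K n g χ')
    (ha : χ = ∑ i, (a i : ℚ) • binomPoly (i : ℕ))
    (hb : χ' = ∑ i, (b i : ℚ) • binomPoly (i : ℕ)) :
    χ'.degree = χ.degree ∧
    b (Fin.last (2*n)) = a (Fin.last (2*n)) ∧
    ∀ i : Fin (2*n+1), (i : ℕ) = χ.natDegree → b i = a i := by
  obtain ⟨c, hc⟩ := hχ.exists_eventually_eval_le_eval_add K hχ'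
  obtain ⟨c', hc'⟩ := hχ'.exists_eventually_eval_le_eval_add K hχ
  have hcoeff : ∀ d, χ.natDegree ≤ d → χ'.natDegree ≤ d → χ.coeff d = χ'.coeff d :=
    fun _ hd hd' => Polynomial.coeff_eq_of_eventually_eval_le_eval_add hc hc' hd hd'
  have hdeg : χ.degree = χ'.degree := Polynomial.degree_eq_of_coeff_eq_of_natDegree_le hcoeff
  have hnat : χ.natDegree = χ'.natDegree := Polynomial.natDegree_eq_of_degree_eq hdeg
  have htop (k : Fin (2*n+1)) (hk : χ.natDegree ≤ k) : b k = a k := by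
    have hak := eq_factorial_mul_coeff_of_eq_sum_binomPoly ha hk
    have hbk := eq_factorial_mul_coeff_of_eq_sum_binomPoly hb (hnat ▸ hk)
    rw [← hcoeff k hk (hnat ▸ hk)] at hbk
    exact_mod_cast hbk.trans hak.symm
  refine ⟨hdeg.symm, htop _ ?_, fun i hi => htop i hi.ge⟩
  rw [ha]
  exact natDegree_sum_binomPoly_le _

end
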